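/- arXiv:2212.13241 — 2 statements merged into one kernel-verified Lean document; each statement's English description precedes it below -/
import Mathlib

section
/- Let n ≥ 1, k ≥ 1 and let x = (g; p), y = (h; q) ∈ Z_k ≀ S_n. Then x and y lie in the same Z_k ≀ S_{n−1}-conjugacy class (i.e., there exists z ∈ Z_k ≀ S_{n−1} with y = z⁻¹·x·z) if and only if they have the same marked type, i.e., if and only if T(x) = T(y), the orbit of the last point ν of Fin n under p has the same cardinality as its orbit under q, and the cycle sum of x at ν equals the cycle sum of y at ν. -/
open scoped Classical

/-- The generalized symmetric group `Z_k ≀ S_n`: underlying set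
`(Fin n → ZMod k) × Perm (Fin n)`. -/
def GS (k n : ℕ) : Type := (Fin n → ZMod k) × Equiv.Perm (Fin n)

namespace GS

variable {k n : ℕ}

instance : Mul (GS k n) := ⟨fun x y => (fun i => x.1 (y.2⁻¹ i) + y.1 i, y.2 * x.2)⟩
instance : One (GS k n) := ⟨((0 : Fin n → ZMod k), 1)⟩
instance : Inv (GS k n) := ⟨fun x => (fun i => - x.1 (x.2 i), x.2⁻¹)⟩

theorem mul_def (x y : GS k n) :
    x * y = (fun i => x.1 (y.2⁻¹ i) + y.1 i, y.2 * x.2) := rfl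

theorem one_def : (1 : GS k n) = ((0 : Fin n → ZMod k), 1) := rfl

theorem inv_def (x : GS k n) : x⁻¹ = (fun i => - x.1 (x.2 i), x.2⁻¹) := rfl

instance : Group (GS k n) where
  mul_assoc x y z := by
    refine Prod.ext ?_ (mul_assoc z.2 y.2 x.2).symm
    funext i
    show x.1 (y.2⁻¹ (z.2⁻¹ i)) + y.1 (z.2⁻¹ i) + z.1 i
        = x.1 ((z.2 * y.2)⁻¹ i) + (y.1 (z.2⁻¹ i) + z.1 i)
    rw [mul_inv_rev, Equiv.Perm.mul_apply, add_assoc]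
  one_mul x := by
    refine Prod.ext ?_ (mul_one x.2)
    funext i
    show (0 : ZMod k) + x.1 i = x.1 i
    rw [zero_add]
  mul_one x := by
    refine Prod.ext ?_ (one_mul x.2)
    funext i
    show x.1 ((1 : Equiv.Perm (Fin n))⁻¹ i) + 0 = x.1 i
    simp
  inv_mul_cancel x := by
    refine Prod.ext ?_ (mul_inv_cancel x.2)
    funext i
    show - x.1 (x.2 (x.2⁻¹ i)) + x.1 i = 0
    simp

/-- The orbit of `i` under (the cyclic subgroup generated by) `p`, as a finset. -/
noncomputable def orbitOf (p : Equiv.Perm (Fin n)) (i : Fin n) : Finset (Fin n) :=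
  Finset.univ.filter fun j => p.SameCycle i j

/-- The cycle sum of `x = (g; p)` at `i`: the sum of `g` over the orbit of `i` under `p`. -/
noncomputable def cycleSum (x : GS k n) (i : Fin n) : ZMod k :=
  ∑ j ∈ orbitOf x.2 i, x.1 j

/-- The type invariant of `x = (g; p)`: the multiset, indexed by the orbits `O` of the cyclic
subgroup generated by `p` on `Fin n`, of the pairs `(card O, ∑_{j ∈ O} g j)`. -/
noncomputable def typeInv (x : GS k n) : Multiset (ℕ × ZMod k) :=
  (Finset.univ.image fun i => orbitOf x.2 i).val.map fun O => (O.card, ∑ j ∈ O, x.1 j)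

/-- The last point of `Fin n`. -/
def lastPt (n : ℕ) (hn : 1 ≤ n) : Fin n := ⟨n - 1, by omega⟩

/-- The subgroup `Z_k ≀ S_{n-1}` of `Z_k ≀ S_n`: elements `(f; t)` with `t` fixing the last
point `ν` of `Fin n` and `f ν = 0`. -/
def K (k n : ℕ) (hn : 1 ≤ n) : Subgroup (GS k n) where
  carrier := {z | z.2 (lastPt n hn) = lastPt n hn ∧ z.1 (lastPt n hn) = 0}
  one_mem' := by
    constructor
    · show (1 : Equiv.Perm (Fin n)) (lastPt n hn) = lastPt n hn
      rfl
    · rfl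
  mul_mem' := by
    rintro ⟨f, t⟩ ⟨f', t'⟩ ⟨ht, hf⟩ ⟨ht', hf'⟩
    constructor
    · show t' (t (lastPt n hn)) = lastPt n hn
      rw [ht, ht']
    · show f (t'⁻¹ (lastPt n hn)) + f' (lastPt n hn) = 0
      rw [Equiv.Perm.inv_eq_iff_eq.2 (show lastPt n hn = t' (lastPt n hn) from ht'.symm),
        show f (lastPt n hn) = 0 from hf, show f' (lastPt n hn) = 0 from hf', add_zero]
  inv_mem' := by
    rintro ⟨f, t⟩ ⟨ht, hf⟩
    constructor
    · show t⁻¹ (lastPt n hn) = lastPt n hn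
      exact Equiv.Perm.inv_eq_iff_eq.2 (show lastPt n hn = t (lastPt n hn) from ht.symm)
    · show - f (t (lastPt n hn)) = 0
      rw [show t (lastPt n hn) = lastPt n hn from ht,
        show f (lastPt n hn) = 0 from hf, neg_zero]

end GS

theorem Equiv.Perm.inv_apply_self {α : Type*} (f : Equiv.Perm α) (x : α) : f⁻¹ (f x) = x :=
  f.symm_apply_apply x

theorem Equiv.Perm.apply_inv_self {α : Type*} (f : Equiv.Perm α) (x : α) : f (f⁻¹ x) = x :=
  f.apply_symm_apply x

section AuxAll
open GS
namespace Aux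

open Equiv Equiv.Perm Function Finset

variable {n : ℕ} (p : Equiv.Perm (Fin n)) (a i j : Fin n)

theorem mem_orbitOf_iff : i ∈ orbitOf p a ↔ p.SameCycle a i := by
  simp [orbitOf]

theorem self_mem_orbitOf : a ∈ orbitOf p a := (mem_orbitOf_iff p a a).2 (SameCycle.refl _ _)

/-- minimal period is positive -/
theorem per_pos : 0 < Function.minimalPeriod ⇑p a := by
  apply Function.IsPeriodicPt.minimalPeriod_pos (orderOf_pos p)
  show (⇑p)^[orderOf p] a = a
  rw [← Equiv.Perm.coe_pow, pow_orderOf_eq_one]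
  rfl

theorem mem_periodicPts : a ∈ Function.periodicPts ⇑p :=
  ⟨orderOf p, orderOf_pos p, by
    show (⇑p)^[orderOf p] a = a
    rw [← Equiv.Perm.coe_pow, pow_orderOf_eq_one]; rfl⟩

theorem pow_mod_apply (m : ℕ) :
    (p ^ (m % Function.minimalPeriod ⇑p a)) a = (p ^ m) a := by
  rw [Equiv.Perm.coe_pow, Equiv.Perm.coe_pow]
  exact Function.iterate_mod_minimalPeriod_eq

theorem pow_inj_on {j j' : ℕ} (hj : j < Function.minimalPeriod ⇑p a)
    (hj' : j' < Function.minimalPeriod ⇑p a) (h : (p ^ j) a = (p ^ j') a) : j = j' := by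
  exact Function.iterate_injOn_Iio_minimalPeriod hj hj' h

theorem orbitOf_eq_image :
    orbitOf p a = (Finset.range (Function.minimalPeriod ⇑p a)).image (fun j => (p ^ j) a) := by
  ext i
  rw [mem_orbitOf_iff]
  constructor
  · intro h
    obtain ⟨j, _, hj⟩ := h.exists_pow_eq'
    exact Finset.mem_image.2 ⟨j % _, Finset.mem_range.2 (Nat.mod_lt _ (per_pos p a)),
      by rw [pow_mod_apply]; exact hj⟩
  · rintro hi
    obtain ⟨j, -, rfl⟩ := Finset.mem_image.1 hi
    exact ⟨(j : ℤ), by simp⟩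

theorem card_orbitOf : (orbitOf p a).card = Function.minimalPeriod ⇑p a := by
  rw [orbitOf_eq_image, Finset.card_image_of_injOn, Finset.card_range]
  intro j hj j' hj' h
  exact pow_inj_on p a (Finset.mem_range.1 hj) (Finset.mem_range.1 hj') h

theorem orbitOf_eq_of_mem (h : i ∈ orbitOf p a) : orbitOf p i = orbitOf p a := by
  rw [mem_orbitOf_iff] at h
  ext j
  rw [mem_orbitOf_iff, mem_orbitOf_iff]
  exact ⟨fun hj => h.trans hj, fun hj => h.symm.trans hj⟩

theorem apply_mem_orbitOf_iff : p i ∈ orbitOf p a ↔ i ∈ orbitOf p a := by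
  rw [mem_orbitOf_iff, mem_orbitOf_iff]
  exact Equiv.Perm.sameCycle_apply_right

theorem inv_apply_mem_orbitOf_iff : p⁻¹ i ∈ orbitOf p a ↔ i ∈ orbitOf p a := by
  rw [mem_orbitOf_iff, mem_orbitOf_iff]
  exact Equiv.Perm.sameCycle_symm_apply_right

theorem pow_apply_mem_orbitOf (m : ℕ) (h : i ∈ orbitOf p a) : (p ^ m) i ∈ orbitOf p a := by
  rw [mem_orbitOf_iff] at h ⊢
  exact h.pow_right

/-- telescoping reindex: summing `F ∘ p⁻¹` over an orbit equals summing `F`. -/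
theorem sum_orbit_inv_apply {M : Type*} [AddCommMonoid M] (F : Fin n → M) :
    ∑ i ∈ orbitOf p a, F (p⁻¹ i) = ∑ i ∈ orbitOf p a, F i := by
  apply Finset.sum_nbij' (fun i => p⁻¹ i) (fun i => p i)
  · intro i hi; exact (inv_apply_mem_orbitOf_iff p a i).2 hi
  · intro i hi; exact (apply_mem_orbitOf_iff p a i).2 hi
  · intro i _; simp
  · intro i _; simp
  · intro i _; rfl

end Aux

section Chunk2
open Finset

variable {α β γ : Type*}

/-- Extract a bijective matching from equal mapped multisets of finsets. -/
theorem exists_bij_of_map_eq [Nonempty β] [DecidableEq α] [DecidableEq β] (F : α → γ) (G : β → γ) :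
    ∀ N : ℕ, ∀ s : Finset α, ∀ t : Finset β, s.card = N →
      s.val.map F = t.val.map G →
      ∃ σ : α → β, Set.BijOn σ ↑s ↑t ∧ ∀ a ∈ s, F a = G (σ a) := by
  intro N
  induction N with
  | zero =>
    intro s t hs h
    rw [Finset.card_eq_zero] at hs
    subst hs
    simp only [Finset.empty_val, Multiset.map_zero] at h
    have ht : t = ∅ := Finset.val_eq_zero.1 (Multiset.map_eq_zero.1 h.symm)
    subst ht
    exact ⟨fun _ => Classical.arbitrary β, by simp [Set.BijOn], by simp⟩
  | succ N ih =>
    intro s t hs h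
    obtain ⟨a, ha⟩ : s.Nonempty := Finset.card_pos.1 (by omega)
    have hsv : s.val = a ::ₘ (s.erase a).val := by
      rw [Finset.erase_val, Multiset.cons_erase (by exact ha)]
    have hFa : F a ∈ t.val.map G := by
      rw [← h, hsv, Multiset.map_cons]; exact Multiset.mem_cons_self _ _
    obtain ⟨b, hb, hab⟩ := Multiset.mem_map.1 hFa
    have hb' : b ∈ t := hb
    have htv : t.val = b ::ₘ (t.erase b).val := by
      rw [Finset.erase_val, Multiset.cons_erase (by exact hb')]
    rw [hsv, htv, Multiset.map_cons, Multiset.map_cons] at h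
    rw [hab] at h
    have h' : Multiset.map F (s.erase a).val = Multiset.map G (t.erase b).val :=
      (Multiset.cons_inj_right (F a)).1 h
    have hcard : (s.erase a).card = N := by
      rw [Finset.card_erase_of_mem ha, hs]; rfl
    obtain ⟨σ', hσ'bij, hσ'val⟩ := ih (s.erase a) (t.erase b) hcard h'
    refine ⟨Function.update σ' a b, ?_, ?_⟩
    · constructor
      · -- MapsTo
        intro x hx
        by_cases hxa : x = a
        · subst hxa; simp [Function.update_self]; exact hb'
        · rw [Function.update_of_ne hxa]
          exact Finset.mem_of_mem_erase (hσ'bij.1 (Finset.mem_erase.2 ⟨hxa, hx⟩))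
      constructor
      · -- InjOn
        intro x hx y hy hxy
        by_cases hxa : x = a <;> by_cases hya : y = a
        · rw [hxa, hya]
        · subst hxa
          rw [Function.update_self, Function.update_of_ne hya] at hxy
          exact absurd (hxy ▸ hσ'bij.1 (Finset.mem_erase.2 ⟨hya, hy⟩))
            (fun hc => (Finset.mem_erase.1 hc).1 rfl)
        · subst hya
          rw [Function.update_self, Function.update_of_ne hxa] at hxy
          exact absurd (hxy ▸ hσ'bij.1 (Finset.mem_erase.2 ⟨hxa, hx⟩))
            (fun hc => (Finset.mem_erase.1 hc).1 rfl)
        · rw [Function.update_of_ne hxa, Function.update_of_ne hya] at hxy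
          exact hσ'bij.2.1 (Finset.mem_erase.2 ⟨hxa, hx⟩) (Finset.mem_erase.2 ⟨hya, hy⟩) hxy
      · -- SurjOn
        intro y hy
        by_cases hyb : y = b
        · exact ⟨a, ha, by simp [hyb]⟩
        · obtain ⟨x, hx, hxy⟩ := hσ'bij.2.2 (show y ∈ ↑(t.erase b) from Finset.mem_coe.2
            (Finset.mem_erase.2 ⟨hyb, hy⟩))
          have hx' : x ∈ s.erase a := hx
          refine ⟨x, Finset.mem_of_mem_erase hx', ?_⟩
          rw [Function.update_of_ne (Finset.mem_erase.1 hx').1]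
          exact hxy
    · intro x hx
      by_cases hxa : x = a
      · subst hxa; rw [Function.update_self]; exact hab.symm
      · rw [Function.update_of_ne hxa]
        exact hσ'val x (Finset.mem_erase.2 ⟨hxa, hx⟩)

end Chunk2

namespace Aux
open Equiv Equiv.Perm Function Finset

variable {n : ℕ} (p : Equiv.Perm (Fin n)) (a i : Fin n)

/-- the exponent of `i` over basepoint `a`: unique `j < minimalPeriod` with `p^j a = i`. -/
noncomputable def expOf : ℕ :=
  if h : ∃ j, j < Function.minimalPeriod ⇑p a ∧ (p ^ j) a = i then h.choose else 0

theorem expOf_spec (h : i ∈ orbitOf p a) :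
    expOf p a i < Function.minimalPeriod ⇑p a ∧ (p ^ expOf p a i) a = i := by
  rw [orbitOf_eq_image] at h
  obtain ⟨j, hj, hji⟩ := Finset.mem_image.1 h
  have hex : ∃ j, j < Function.minimalPeriod ⇑p a ∧ (p ^ j) a = i :=
    ⟨j, Finset.mem_range.1 hj, hji⟩
  rw [expOf, dif_pos hex]
  exact hex.choose_spec

theorem expOf_lt (h : i ∈ orbitOf p a) : expOf p a i < Function.minimalPeriod ⇑p a :=
  (expOf_spec p a i h).1

theorem pow_expOf (h : i ∈ orbitOf p a) : (p ^ expOf p a i) a = i :=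
  (expOf_spec p a i h).2

theorem expOf_eq {j : ℕ} (hj : j < Function.minimalPeriod ⇑p a) (hji : (p ^ j) a = i) :
    expOf p a i = j := by
  have hi : i ∈ orbitOf p a := by
    rw [orbitOf_eq_image]
    exact Finset.mem_image.2 ⟨j, Finset.mem_range.2 hj, hji⟩
  exact pow_inj_on p a (expOf_lt p a i hi) hj (by rw [pow_expOf p a i hi, hji])

theorem expOf_base : expOf p a a = 0 :=
  expOf_eq p a a (per_pos p a) (by simp)

/-- a basepoint for each orbit: `ν` if `ν ∈ O`, else the min. -/
noncomputable def bpt (ν : Fin n) (O : Finset (Fin n)) : Fin n :=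
  if h : O.Nonempty then (if ν ∈ O then ν else O.min' h) else ν

theorem bpt_mem (ν : Fin n) (O : Finset (Fin n)) (h : O.Nonempty) : bpt ν O ∈ O := by
  rw [bpt, dif_pos h]
  split
  · assumption
  · exact O.min'_mem h

theorem bpt_nu (ν : Fin n) (O : Finset (Fin n)) (h : ν ∈ O) : bpt ν O = ν := by
  rw [bpt, dif_pos ⟨ν, h⟩, if_pos h]

/-- the collection of orbits of `p`. -/
noncomputable def orbitSet : Finset (Finset (Fin n)) := Finset.univ.image (orbitOf p)

theorem orbitOf_mem_orbitSet : orbitOf p i ∈ orbitSet p :=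
  Finset.mem_image.2 ⟨i, Finset.mem_univ i, rfl⟩

theorem orbitSet_nonempty_mem {O : Finset (Fin n)} (h : O ∈ orbitSet p) : O.Nonempty := by
  obtain ⟨i, -, rfl⟩ := Finset.mem_image.1 h
  exact ⟨i, self_mem_orbitOf p i⟩

theorem orbitOf_bpt (ν : Fin n) {O : Finset (Fin n)} (h : O ∈ orbitSet p) :
    orbitOf p (bpt ν O) = O := by
  obtain ⟨i, -, rfl⟩ := Finset.mem_image.1 h
  exact orbitOf_eq_of_mem p i _ (bpt_mem ν _ ⟨i, self_mem_orbitOf p i⟩)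

end Aux

end AuxAll

section Fwd
open GS Aux Equiv Finset

variable {k n : ℕ}

theorem orbitOf_conj (t p : Equiv.Perm (Fin n)) (i : Fin n) :
    orbitOf (t * (p * t⁻¹)) (t i) = (orbitOf p i).image t := by
  ext j
  rw [Aux.mem_orbitOf_iff, Finset.mem_image]
  rw [show t * (p * t⁻¹) = t * p * t⁻¹ from (mul_assoc _ _ _).symm,
    Equiv.Perm.sameCycle_conj]
  simp only [Equiv.Perm.inv_apply_self]
  constructor
  · intro hsc
    exact ⟨t⁻¹ j, (Aux.mem_orbitOf_iff p i (t⁻¹ j)).2 hsc, by simp⟩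
  · rintro ⟨a, ha, rfl⟩
    simpa using (Aux.mem_orbitOf_iff p i a).1 ha

theorem sum_conj_orbit (t p : Equiv.Perm (Fin n)) (f g : Fin n → ZMod k) (c : Fin n) :
    ∑ j ∈ (orbitOf p c).image t,
      ((-(f (t ((p⁻¹) (t⁻¹ j)))) + g (t⁻¹ j)) + f j) = ∑ i ∈ orbitOf p c, g i := by
  rw [Finset.sum_image (fun a _ b _ h => t.injective h)]
  simp only [Equiv.Perm.inv_apply_self]
  have h1 : ∀ i ∈ orbitOf p c,
      (-(f (t (p⁻¹ i))) + g i) + f (t i) = g i + ((-(f (t (p⁻¹ i)))) + f (t i)) := by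
    intros; ring
  rw [Finset.sum_congr rfl h1, Finset.sum_add_distrib]
  have h2 : ∑ i ∈ orbitOf p c, ((-(f (t (p⁻¹ i)))) + f (t i)) = 0 := by
    rw [Finset.sum_add_distrib]
    rw [show (∑ i ∈ orbitOf p c, -(f (t (p⁻¹ i))))
        = -∑ i ∈ orbitOf p c, (fun j => f (t j)) (p⁻¹ i) by
      rw [← Finset.sum_neg_distrib]]
    rw [Aux.sum_orbit_inv_apply p c (fun j => f (t j))]
    exact neg_add_cancel _
  rw [h2, add_zero]

theorem fwd_dir (hn : 1 ≤ n) (x z : GS k n) (hz : z ∈ K k n hn) :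
    typeInv x = typeInv (z⁻¹ * x * z) ∧
      (orbitOf x.2 (lastPt n hn)).card = (orbitOf (z⁻¹ * x * z).2 (lastPt n hn)).card ∧
      cycleSum x (lastPt n hn) = cycleSum (z⁻¹ * x * z) (lastPt n hn) := by
  have hzt : z.2 (lastPt n hn) = lastPt n hn := hz.1
  have hzf : z.1 (lastPt n hn) = 0 := hz.2
  have hy2 : (z⁻¹ * x * z).2 = z.2 * (x.2 * z.2⁻¹) := rfl
  have hy1 : (z⁻¹ * x * z).1
      = fun j => (-(z.1 (z.2 (x.2⁻¹ (z.2⁻¹ j)))) + x.1 (z.2⁻¹ j)) + z.1 j := rfl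
  set ν := lastPt n hn with hν
  set p := x.2
  set g := x.1
  set t := z.2
  set f := z.1
  have horb : ∀ i, orbitOf (t * (p * t⁻¹)) (t i) = (orbitOf p i).image t :=
    orbitOf_conj t p
  have horbν : orbitOf (t * (p * t⁻¹)) ν = (orbitOf p ν).image t := by
    conv_lhs => rw [show ν = t ν from hzt.symm]
    rw [horb ν]
  refine ⟨?_, ?_, ?_⟩
  · rw [typeInv, typeInv, hy1, hy2]
    have hos : Finset.univ.image (fun i => orbitOf (t * (p * t⁻¹)) i)
        = (Finset.univ.image fun i => orbitOf p i).image (Finset.image ⇑t) := by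
      ext O
      simp only [Finset.mem_image]
      constructor
      · rintro ⟨i, -, rfl⟩
        exact ⟨orbitOf p (t⁻¹ i), ⟨t⁻¹ i, Finset.mem_univ _, rfl⟩, by
          rw [← horb (t⁻¹ i)]; simp⟩
      · rintro ⟨O', ⟨i, -, rfl⟩, rfl⟩
        exact ⟨t i, Finset.mem_univ _, horb i⟩
    rw [hos, Finset.image_val_of_injOn
      ((Finset.image_injective t.injective).injOn), Multiset.map_map]
    apply Multiset.map_congr rfl
    intro O hO
    have hO' : O ∈ Finset.univ.image fun i => orbitOf p i := hO
    obtain ⟨c, -, rfl⟩ := Finset.mem_image.1 hO'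
    simp only [Function.comp_apply]
    refine Prod.ext ?_ ?_
    · exact (Finset.card_image_of_injective (orbitOf p c) t.injective).symm
    · exact (sum_conj_orbit t p f g c).symm
  · rw [hy2, horbν, Finset.card_image_of_injective _ t.injective]
  · rw [cycleSum, cycleSum, hy1, hy2, horbν]
    exact (sum_conj_orbit t p f g ν).symm

end Fwd


section Bwd
open GS Aux Equiv Finset

variable {k n : ℕ}

theorem sum_orbit_eq_sum_range (q : Equiv.Perm (Fin n)) (c : Fin n) (F : Fin n → ZMod k) :
    ∑ i ∈ orbitOf q c, F i
      = ∑ j ∈ Finset.range (Function.minimalPeriod ⇑q c), F ((q ^ j) c) := by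
  rw [orbitOf_eq_image, Finset.sum_image]
  intro a ha b hb hab
  exact pow_inj_on q c (Finset.mem_range.1 ha) (Finset.mem_range.1 hb) hab

theorem exists_f (ν : Fin n) (q : Equiv.Perm (Fin n)) (d : Fin n → ZMod k)
    (hdsum : ∀ c, ∑ i ∈ orbitOf q c, d i = 0) :
    ∃ f : Fin n → ZMod k, f ν = 0 ∧ ∀ i, f i - f (q⁻¹ i) = d i := by
  classical
  set f : Fin n → ZMod k := fun i =>
    ∑ j ∈ Finset.range (expOf q (bpt ν (orbitOf q i)) i),
      d ((q ^ (j + 1)) (bpt ν (orbitOf q i))) with hf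
  have horb : ∀ i : Fin n, orbitOf q i ∈ orbitSet q := fun i => orbitOf_mem_orbitSet q i
  have hbm : ∀ i : Fin n, bpt ν (orbitOf q i) ∈ orbitOf q i :=
    fun i => bpt_mem ν _ (orbitSet_nonempty_mem q (horb i))
  have hbo : ∀ i : Fin n, orbitOf q (bpt ν (orbitOf q i)) = orbitOf q i :=
    fun i => orbitOf_bpt q ν (horb i)
  refine ⟨f, ?_, ?_⟩
  · -- f ν = 0
    have h1 : bpt ν (orbitOf q ν) = ν := bpt_nu ν _ (self_mem_orbitOf q ν)
    rw [hf]
    simp only [h1, expOf_base, Finset.range_zero, Finset.sum_empty]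
  · intro i
    set c := bpt ν (orbitOf q i) with hc
    have hiorb : i ∈ orbitOf q c := by rw [hbo i]; exact self_mem_orbitOf q i
    have hqorb : orbitOf q (q⁻¹ i) = orbitOf q i :=
      orbitOf_eq_of_mem q i _ ((inv_apply_mem_orbitOf_iff q i i).2
        (self_mem_orbitOf q i))
    have hfq : f (q⁻¹ i) = ∑ j ∈ Finset.range (expOf q c (q⁻¹ i)), d ((q ^ (j + 1)) c) := by
      rw [hf]
      simp only [hqorb, ← hc]
    set m := Function.minimalPeriod ⇑q c with hm
    have hmpos : 0 < m := per_pos q c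
    have he_lt : expOf q c i < m := expOf_lt q c i hiorb
    have he : (q ^ expOf q c i) c = i := pow_expOf q c i hiorb
    have hsum0 : ∑ j ∈ Finset.range m, d ((q ^ j) c) = 0 := by
      rw [← sum_orbit_eq_sum_range q c d, hdsum c]
    rcases Nat.eq_zero_or_pos (expOf q c i) with h0 | hpos
    · -- i = c
      have hic : i = c := by rw [← he, h0, pow_zero]; rfl
      have hfi : f i = 0 := by
        rw [hf]; simp only [← hc, h0, Finset.range_zero, Finset.sum_empty]
      have hmc : (q ^ m) c = c := by
        rw [← pow_mod_apply q c m, ← hm, Nat.mod_self, pow_zero]; rfl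
      have hq1 : (q ^ (m - 1)) c = q⁻¹ i := by
        apply q.injective
        rw [Equiv.Perm.apply_inv_self, hic]
        have hstep : (q ^ ((m - 1) + 1)) c = q ((q ^ (m - 1)) c) := by
          rw [pow_succ']; rfl
        rw [← hstep, show (m - 1) + 1 = m by omega, hmc]
      have hexp : expOf q c (q⁻¹ i) = m - 1 :=
        expOf_eq q c _ (by omega) hq1
      have hsum' : ∑ j ∈ Finset.range ((m - 1) + 1), d ((q ^ j) c)
          = (∑ j ∈ Finset.range (m - 1), d ((q ^ (j + 1)) c)) + d ((q ^ 0) c) :=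
        Finset.sum_range_succ' _ _
      rw [show (m - 1) + 1 = m by omega] at hsum'
      rw [hsum0] at hsum'
      rw [hfi, hfq, hexp, zero_sub, hic]
      have : d ((q ^ 0) c) = d c := by rw [pow_zero]; rfl
      rw [this] at hsum'
      linear_combination hsum'
    · -- expOf = e' + 1
      obtain ⟨e', he'⟩ : ∃ e', expOf q c i = e' + 1 := ⟨expOf q c i - 1, by omega⟩
      have hi2 : (q ^ (e' + 1)) c = i := by rw [← he', he]
      have hq1 : (q ^ e') c = q⁻¹ i := by
        apply q.injective
        rw [Equiv.Perm.apply_inv_self, ← hi2]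
        have hstep : (q ^ (e' + 1)) c = q ((q ^ e') c) := by
          rw [pow_succ']; rfl
        rw [hstep]
      have hexp : expOf q c (q⁻¹ i) = e' := expOf_eq q c _ (by omega) hq1
      have hfi : f i = ∑ j ∈ Finset.range (e' + 1), d ((q ^ (j + 1)) c) := by
        rw [hf]; simp only [← hc, he']
      rw [hfi, hfq, hexp, Finset.sum_range_succ, hi2]
      ring
end Bwd

section Bwd2
open GS Aux Equiv Finset

variable {k n : ℕ}

theorem exists_t (ν : Fin n) (p q : Equiv.Perm (Fin n))
    (σ : Finset (Fin n) → Finset (Fin n))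
    (hbij : Set.BijOn σ ↑(orbitSet p) ↑(orbitSet q))
    (hcard : ∀ O ∈ orbitSet p, (σ O).card = O.card)
    (hσν : σ (orbitOf p ν) = orbitOf q ν) :
    ∃ t : Equiv.Perm (Fin n), t ν = ν ∧ q = t * (p * t⁻¹) ∧
      ∀ O ∈ orbitSet p, O.image ⇑t = σ O := by
  classical
  set a : Fin n → Fin n := fun i => bpt ν (orbitOf p i) with ha
  set b : Fin n → Fin n := fun i => bpt ν (σ (orbitOf p i)) with hb
  have hOP : ∀ i : Fin n, orbitOf p i ∈ orbitSet p := fun i => orbitOf_mem_orbitSet p i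
  have hOQ : ∀ i : Fin n, σ (orbitOf p i) ∈ orbitSet q := fun i => hbij.1 (hOP i)
  have haorb : ∀ i : Fin n, orbitOf p (a i) = orbitOf p i :=
    fun i => orbitOf_bpt p ν (hOP i)
  have hborb : ∀ i : Fin n, orbitOf q (b i) = σ (orbitOf p i) :=
    fun i => orbitOf_bpt q ν (hOQ i)
  have hiao : ∀ i : Fin n, i ∈ orbitOf p (a i) := by
    intro i; rw [haorb i]; exact self_mem_orbitOf p i
  have hper : ∀ i : Fin n, Function.minimalPeriod ⇑q (b i) = Function.minimalPeriod ⇑p (a i) := by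
    intro i
    rw [← card_orbitOf q (b i), ← card_orbitOf p (a i), hborb i, haorb i, hcard _ (hOP i)]
  set Φ : Fin n → Fin n := fun i => (q ^ expOf p (a i) i) (b i) with hΦ
  have hΦorb : ∀ i : Fin n, Φ i ∈ σ (orbitOf p i) := by
    intro i
    rw [← hborb i, hΦ]
    exact pow_apply_mem_orbitOf q (b i) (b i) _ (self_mem_orbitOf q (b i))
  have hsame : ∀ i j : Fin n, orbitOf p j = orbitOf p i → a j = a i ∧ b j = b i := by
    intro i j hij
    constructor
    · rw [ha]; simp only [hij]
    · rw [hb]; simp only [hij]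
  have hΦp : ∀ i : Fin n, Φ (p i) = q (Φ i) := by
    intro i
    have hoi : orbitOf p (p i) = orbitOf p i :=
      orbitOf_eq_of_mem p i (p i) ((apply_mem_orbitOf_iff p i i).2 (self_mem_orbitOf p i))
    obtain ⟨haa, hbb⟩ := hsame i (p i) hoi
    set m := Function.minimalPeriod ⇑p (a i) with hm
    have hpi : p i ∈ orbitOf p (a i) := by
      rw [haorb i, ← hoi]; exact self_mem_orbitOf p (p i)
    have he : (p ^ expOf p (a i) i) (a i) = i := pow_expOf p (a i) i (hiao i)
    have hkey : (p ^ ((expOf p (a i) i + 1) % m)) (a i) = p i := by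
      rw [pow_mod_apply p (a i) _]
      have : (p ^ (expOf p (a i) i + 1)) (a i) = p ((p ^ expOf p (a i) i) (a i)) := by
        rw [pow_succ']; rfl
      rw [this, he]
    have hexp : expOf p (a i) (p i) = (expOf p (a i) i + 1) % m :=
      expOf_eq p (a i) (p i) (Nat.mod_lt _ (per_pos p (a i))) hkey
    rw [hΦ]
    simp only [haa, hbb, hexp]
    rw [show (q ^ ((expOf p (a i) i + 1) % m)) (b i)
        = (q ^ (expOf p (a i) i + 1)) (b i) by
      rw [hm, ← hper i]
      exact pow_mod_apply q (b i) _]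
    rw [pow_succ']; rfl
  have hqorbΦ : ∀ i : Fin n, orbitOf q (Φ i) = σ (orbitOf p i) := by
    intro i
    rw [← hborb i]
    exact orbitOf_eq_of_mem q (b i) (Φ i) (by rw [hborb i]; exact hΦorb i)
  have hΦinj : Function.Injective Φ := by
    intro i j hij
    have ho : orbitOf p i = orbitOf p j :=
      hbij.2.1 (hOP i) (hOP j) (by rw [← hqorbΦ i, ← hqorbΦ j, hij])
    obtain ⟨haa, hbb⟩ := hsame i j ho.symm
    have hlt1 : expOf p (a i) i < Function.minimalPeriod ⇑q (b i) := by
      rw [hper i]; exact expOf_lt p (a i) i (hiao i)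
    have hlt2 : expOf p (a j) j < Function.minimalPeriod ⇑q (b i) := by
      rw [← hbb, hper j]; exact expOf_lt p (a j) j (hiao j)
    have heq : expOf p (a i) i = expOf p (a j) j := by
      apply pow_inj_on q (b i) hlt1 hlt2
      rw [hΦ] at hij
      simp only at hij
      rw [hbb] at hij
      exact hij
    have hkey : (p ^ expOf p (a j) j) (a j) = (p ^ expOf p (a i) i) (a i) := by
      rw [← heq, haa]
    rw [← pow_expOf p (a i) i (hiao i), ← pow_expOf p (a j) j (hiao j)]
    exact hkey.symm
  have hΦbij : Function.Bijective Φ := Finite.injective_iff_bijective.1 hΦinj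
  refine ⟨Equiv.ofBijective Φ hΦbij, ?_, ?_, ?_⟩
  · show Φ ν = ν
    have h1 : a ν = ν := by
      rw [ha]; simp only; exact bpt_nu ν _ (self_mem_orbitOf p ν)
    have h2 : b ν = ν := by
      rw [hb]; simp only [hσν]; exact bpt_nu ν _ (self_mem_orbitOf q ν)
    rw [hΦ]; simp only [h1, h2, expOf_base, pow_zero]; rfl
  · set t := Equiv.ofBijective Φ hΦbij with ht
    have happ : ∀ i, t i = Φ i := fun i => rfl
    apply Equiv.ext
    intro j
    rw [Equiv.Perm.mul_apply, Equiv.Perm.mul_apply, happ, hΦp, ← happ,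
      Equiv.Perm.apply_inv_self]
  · set t := Equiv.ofBijective Φ hΦbij with ht
    have hcoe : ⇑t = Φ := rfl
    intro O hO
    rw [hcoe]
    obtain ⟨c, -, rfl⟩ := Finset.mem_image.1 hO
    apply Finset.eq_of_subset_of_card_le
    · intro j hj
      obtain ⟨i, hi, rfl⟩ := Finset.mem_image.1 hj
      rw [← orbitOf_eq_of_mem p c i hi]
      exact hΦorb i
    · rw [Finset.card_image_of_injective _ hΦinj,
        hcard _ (orbitOf_mem_orbitSet p c)]
end Bwd2

section Bwd3
open GS Aux Equiv Finset

theorem bijOn_update {α β : Type*} [DecidableEq α] [DecidableEq β] (σ' : α → β) (s : Finset α)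
    (t : Finset β) (a : α) (b : β) (ha : a ∈ s) (hb : b ∈ t)
    (hbij : Set.BijOn σ' ↑(s.erase a) ↑(t.erase b)) :
    Set.BijOn (Function.update σ' a b) ↑s ↑t := by
  constructor
  · intro x hx
    by_cases hxa : x = a
    · subst hxa; simp only [Function.update_self]; exact hb
    · rw [Function.update_of_ne hxa]
      exact Finset.mem_of_mem_erase (hbij.1 (Finset.mem_erase.2 ⟨hxa, hx⟩))
  constructor
  · intro x hx y hy hxy
    by_cases hxa : x = a <;> by_cases hya : y = a
    · rw [hxa, hya]
    · subst hxa
      rw [Function.update_self, Function.update_of_ne hya] at hxy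
      exact absurd (hxy ▸ hbij.1 (Finset.mem_erase.2 ⟨hya, hy⟩))
        (fun hc => (Finset.mem_erase.1 hc).1 rfl)
    · subst hya
      rw [Function.update_self, Function.update_of_ne hxa] at hxy
      exact absurd (hxy ▸ hbij.1 (Finset.mem_erase.2 ⟨hxa, hx⟩))
        (fun hc => (Finset.mem_erase.1 hc).1 rfl)
    · rw [Function.update_of_ne hxa, Function.update_of_ne hya] at hxy
      exact hbij.2.1 (Finset.mem_erase.2 ⟨hxa, hx⟩) (Finset.mem_erase.2 ⟨hya, hy⟩) hxy
  · intro y hy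
    by_cases hyb : y = b
    · exact ⟨a, ha, by simp [hyb]⟩
    · obtain ⟨x, hx, hxy⟩ := hbij.2.2 (show y ∈ ↑(t.erase b) from Finset.mem_coe.2
        (Finset.mem_erase.2 ⟨hyb, hy⟩))
      have hx' : x ∈ s.erase a := hx
      refine ⟨x, Finset.mem_of_mem_erase hx', ?_⟩
      rw [Function.update_of_ne (Finset.mem_erase.1 hx').1]
      exact hxy

variable {k n : ℕ}

theorem conj_snd (x z : GS k n) : (z⁻¹ * x * z).2 = z.2 * (x.2 * z.2⁻¹) := rfl

theorem conj_fst (x z : GS k n) : (z⁻¹ * x * z).1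
    = fun j => (-(z.1 (z.2 (x.2⁻¹ (z.2⁻¹ j)))) + x.1 (z.2⁻¹ j)) + z.1 j := rfl

theorem bwd_dir (hn : 1 ≤ n) (x y : GS k n)
    (h1 : typeInv x = typeInv y)
    (h2 : (orbitOf x.2 (lastPt n hn)).card = (orbitOf y.2 (lastPt n hn)).card)
    (h3 : cycleSum x (lastPt n hn) = cycleSum y (lastPt n hn)) :
    ∃ z ∈ K k n hn, y = z⁻¹ * x * z := by
  classical
  set ν := lastPt n hn with hν
  set p := x.2 with hp
  set g := x.1 with hg
  set q := y.2 with hq0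
  set h := y.1 with hh
  set F : Finset (Fin n) → ℕ × ZMod k := fun O => (O.card, ∑ j ∈ O, g j) with hF
  set G : Finset (Fin n) → ℕ × ZMod k := fun O => (O.card, ∑ j ∈ O, h j) with hG
  have h1' : (orbitSet p).val.map F = (orbitSet q).val.map G := by
    rw [typeInv, typeInv] at h1; exact h1
  have hOx : orbitOf p ν ∈ orbitSet p := orbitOf_mem_orbitSet p ν
  have hOy : orbitOf q ν ∈ orbitSet q := orbitOf_mem_orbitSet q ν
  have h3' : ∑ j ∈ orbitOf p ν, g j = ∑ j ∈ orbitOf q ν, h j := h3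
  have hFG : F (orbitOf p ν) = G (orbitOf q ν) := Prod.ext h2 h3'
  have hsv : (orbitSet p).val = orbitOf p ν ::ₘ ((orbitSet p).erase (orbitOf p ν)).val := by
    rw [Finset.erase_val, Multiset.cons_erase (by exact hOx)]
  have htv : (orbitSet q).val = orbitOf q ν ::ₘ ((orbitSet q).erase (orbitOf q ν)).val := by
    rw [Finset.erase_val, Multiset.cons_erase (by exact hOy)]
  rw [hsv, htv, Multiset.map_cons, Multiset.map_cons, hFG] at h1'
  have h1'' := (Multiset.cons_inj_right _).1 h1'
  obtain ⟨σ', hσ'bij, hσ'val⟩ := exists_bij_of_map_eq F G _ _ _ rfl h1''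
  set σ := Function.update σ' (orbitOf p ν) (orbitOf q ν) with hσ
  have hσν : σ (orbitOf p ν) = orbitOf q ν := by
    rw [hσ]; exact Function.update_self _ _ _
  have hσbij : Set.BijOn σ ↑(orbitSet p) ↑(orbitSet q) :=
    bijOn_update σ' _ _ _ _ hOx hOy hσ'bij
  have hσval : ∀ O ∈ orbitSet p, F O = G (σ O) := by
    intro O hO
    by_cases hOν : O = orbitOf p ν
    · rw [hOν, hσν]; exact hFG
    · have hupd : σ O = σ' O := by rw [hσ]; exact Function.update_of_ne hOν _ _
      rw [hupd]
      exact hσ'val O (Finset.mem_erase.2 ⟨hOν, hO⟩)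
  have hcard : ∀ O ∈ orbitSet p, (σ O).card = O.card := by
    intro O hO
    exact (congrArg Prod.fst (hσval O hO)).symm
  have hsum : ∀ O ∈ orbitSet p, ∑ j ∈ O, g j = ∑ j ∈ σ O, h j := by
    intro O hO
    exact congrArg Prod.snd (hσval O hO)
  obtain ⟨t, htν, hq, htimg⟩ := exists_t ν p q σ hσbij hcard hσν
  set d : Fin n → ZMod k := fun i => h i - g (t⁻¹ i) with hd
  have hdsum : ∀ c, ∑ i ∈ orbitOf q c, d i = 0 := by
    intro c
    obtain ⟨O, hO, hOc⟩ := hσbij.2.2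
      (show orbitOf q c ∈ ↑(orbitSet q) from orbitOf_mem_orbitSet q c)
    have hO' : O ∈ orbitSet p := hO
    rw [← hOc, hd]
    simp only
    have hgt : ∀ i ∈ O, g (t⁻¹ (t i)) = g i := by
      intro i _; rw [Equiv.Perm.inv_apply_self]
    have e2 : ∑ j ∈ Finset.image (⇑t) O, g (t⁻¹ j) = ∑ i ∈ O, g (t⁻¹ (t i)) :=
      Finset.sum_image (fun a _ b _ hab => t.injective hab)
    have e3 : ∑ i ∈ O, g (t⁻¹ (t i)) = ∑ i ∈ O, g i := Finset.sum_congr rfl hgt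
    have e5 : ∑ j ∈ σ O, g (t⁻¹ j) = ∑ i ∈ O, g i := by
      rw [← htimg O hO', e2, e3]
    rw [Finset.sum_sub_distrib, e5, ← hsum O hO', sub_self]
  obtain ⟨f, hfν, hfrel⟩ := exists_f ν q d hdsum
  have ht_inv : ∀ j, t (p⁻¹ (t⁻¹ j)) = q⁻¹ j := by
    intro j
    apply q.injective
    rw [Equiv.Perm.apply_inv_self, hq]
    simp [Equiv.Perm.mul_apply]
  refine ⟨⟨f, t⟩, ⟨?_, ?_⟩, ?_⟩
  · exact htν
  · exact hfν
  · refine Prod.ext ?_ ?_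
    · show y.1 = (fun j => (-(f (t (p⁻¹ (t⁻¹ j)))) + g (t⁻¹ j)) + f j)
      funext j
      show h j = (-(f (t (p⁻¹ (t⁻¹ j)))) + g (t⁻¹ j)) + f j
      rw [ht_inv j]
      have hrel := hfrel j
      rw [hd] at hrel
      simp only at hrel
      linear_combination -hrel
    · show y.2 = t * (p * t⁻¹)
      show q = t * (p * t⁻¹)
      exact hq

end Bwd3

open GS in
/-- `x` and `y` are `Z_k ≀ S_{n-1}`-conjugate iff they have the same marked type. -/
theorem K_conjugate_iff_same_marked_type (k n : ℕ) (hk : 1 ≤ k) (hn : 1 ≤ n)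
    (x y : GS k n) :
    (∃ z ∈ K k n hn, y = z⁻¹ * x * z) ↔
      (typeInv x = typeInv y ∧
       (orbitOf x.2 (lastPt n hn)).card = (orbitOf y.2 (lastPt n hn)).card ∧
       cycleSum x (lastPt n hn) = cycleSum y (lastPt n hn)) := by
  constructor
  · rintro ⟨z, hz, rfl⟩
    exact fwd_dir hn x z hz
  · rintro ⟨h1, h2, h3⟩
    exact bwd_dir hn x y h1 h2 h3
end

section
/- Let n ≥ 1 and let x be an element of the hyperoctahedral group Z_2 ≀ S_n. Then x is Z_2 ≀ S_{n−1}-conjugate to its inverse: there exists z ∈ Z_2 ≀ S_{n−1} such that z⁻¹·x·z = x⁻¹. -/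
open scoped Classical

section Aux
open Equiv Equiv.Perm Finset GS

variable {n : ℕ}

lemma mem_orbitOf {p : Perm (Fin n)} {i j : Fin n} :
    j ∈ orbitOf p i ↔ p.SameCycle i j := by
  simp [orbitOf]

lemma self_mem_orbitOf (p : Perm (Fin n)) (i : Fin n) : i ∈ orbitOf p i :=
  mem_orbitOf.2 (SameCycle.refl p i)

lemma orbitOf_congr {p : Perm (Fin n)} {i j : Fin n} (h : p.SameCycle i j) :
    orbitOf p i = orbitOf p j := by
  ext k; simp only [mem_orbitOf]
  exact ⟨fun hk => h.symm.trans hk, fun hk => h.trans hk⟩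

lemma zpow_shift {p : Perm (Fin n)} {b : Fin n} {a c : ℤ}
    (h : (p ^ a) b = (p ^ c) b) (e : ℤ) : (p ^ (e + a)) b = (p ^ (e + c)) b := by
  rw [zpow_add, zpow_add, Perm.mul_apply, Perm.mul_apply, h]

lemma zpow_neg_congr {p : Perm (Fin n)} {b : Fin n} {a c : ℤ}
    (h : (p ^ a) b = (p ^ c) b) : (p ^ (-a)) b = (p ^ (-c)) b := by
  have h2 := zpow_shift h (-a - c)
  rw [show -a - c + a = -c by ring, show -a - c + c = -a by ring] at h2
  exact h2.symm

/-- A base point for each orbit of `p`, chosen to be `ν` on the orbit of `ν`. -/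
noncomputable def pbase (p : Perm (Fin n)) (ν i : Fin n) : Fin n :=
  if p.SameCycle ν i then ν else (orbitOf p i).min' ⟨i, self_mem_orbitOf p i⟩

lemma pbase_sameCycle (p : Perm (Fin n)) (ν i : Fin n) : p.SameCycle (pbase p ν i) i := by
  unfold pbase
  split_ifs with hc
  · exact hc
  · exact (mem_orbitOf.1 ((orbitOf p i).min'_mem ⟨i, self_mem_orbitOf p i⟩)).symm

lemma pbase_congr {p : Perm (Fin n)} (ν : Fin n) {i j : Fin n} (h : p.SameCycle i j) :
    pbase p ν i = pbase p ν j := by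
  have h1 : p.SameCycle ν i ↔ p.SameCycle ν j := ⟨fun w => w.trans h, fun w => w.trans h.symm⟩
  unfold pbase
  split_ifs with a b b
  · rfl
  · exact absurd (h1.1 a) b
  · exact absurd (h1.2 b) a
  · simp only [orbitOf_congr h]

/-- Signed distance from the base point. -/
noncomputable def pdist (p : Perm (Fin n)) (ν i : Fin n) : ℤ :=
  (pbase_sameCycle p ν i).choose

lemma pdist_spec (p : Perm (Fin n)) (ν i : Fin n) :
    (p ^ pdist p ν i) (pbase p ν i) = i :=
  (pbase_sameCycle p ν i).choose_spec

/-- The reversal map: reflects each orbit of `p` about its base point. -/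
noncomputable def Tfun (p : Perm (Fin n)) (ν i : Fin n) : Fin n :=
  (p ^ (-(pdist p ν i))) (pbase p ν i)

lemma sameCycle_Tfun (p : Perm (Fin n)) (ν i : Fin n) : p.SameCycle i (Tfun p ν i) :=
  (pbase_sameCycle p ν i).symm.trans ⟨-(pdist p ν i), rfl⟩

lemma pbase_Tfun (p : Perm (Fin n)) (ν i : Fin n) :
    pbase p ν (Tfun p ν i) = pbase p ν i :=
  (pbase_congr ν (sameCycle_Tfun p ν i)).symm

lemma Tfun_invol (p : Perm (Fin n)) (ν : Fin n) : Function.Involutive (Tfun p ν) := by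
  intro i
  have h1 : (p ^ pdist p ν (Tfun p ν i)) (pbase p ν i) =
      (p ^ (-(pdist p ν i))) (pbase p ν i) := by
    conv_lhs => rw [← pbase_Tfun p ν i]
    exact pdist_spec p ν (Tfun p ν i)
  have h2 := zpow_neg_congr h1
  rw [neg_neg] at h2
  calc Tfun p ν (Tfun p ν i)
      = (p ^ (-(pdist p ν (Tfun p ν i)))) (pbase p ν (Tfun p ν i)) := rfl
    _ = (p ^ (-(pdist p ν (Tfun p ν i)))) (pbase p ν i) := by rw [pbase_Tfun]
    _ = (p ^ pdist p ν i) (pbase p ν i) := h2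
    _ = i := pdist_spec p ν i

lemma Tfun_apply (p : Perm (Fin n)) (ν i : Fin n) :
    Tfun p ν (p i) = p⁻¹ (Tfun p ν i) := by
  have hb : pbase p ν (p i) = pbase p ν i :=
    (pbase_congr ν (⟨1, by simp⟩ : p.SameCycle i (p i))).symm
  have h1 : (p ^ pdist p ν (p i)) (pbase p ν i) =
      (p ^ ((1 : ℤ) + pdist p ν i)) (pbase p ν i) := by
    have hs := pdist_spec p ν (p i)
    rw [hb] at hs
    rw [hs, zpow_add, zpow_one, Perm.mul_apply, pdist_spec]
  have h2 := zpow_neg_congr h1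
  calc Tfun p ν (p i)
      = (p ^ (-(pdist p ν (p i)))) (pbase p ν (p i)) := rfl
    _ = (p ^ (-(pdist p ν (p i)))) (pbase p ν i) := by rw [hb]
    _ = (p ^ (-((1 : ℤ) + pdist p ν i))) (pbase p ν i) := h2
    _ = p⁻¹ (Tfun p ν i) := by
        rw [neg_add, zpow_add, Perm.mul_apply, zpow_neg_one]; rfl

lemma Tfun_fix (p : Perm (Fin n)) (ν : Fin n) : Tfun p ν ν = ν := by
  have hb : pbase p ν ν = ν := if_pos (SameCycle.refl p ν)
  have h1 : (p ^ pdist p ν ν) (pbase p ν ν) = (p ^ (0 : ℤ)) (pbase p ν ν) := by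
    rw [pdist_spec, zpow_zero, hb]; rfl
  have h2 := zpow_neg_congr h1
  rw [neg_zero, zpow_zero] at h2
  calc Tfun p ν ν = (p ^ (-(pdist p ν ν))) (pbase p ν ν) := rfl
    _ = (1 : Perm (Fin n)) (pbase p ν ν) := h2
    _ = ν := by rw [hb]; rfl

/-- Summing a function transported by a self-map of an orbit is unchanged. -/
lemma sum_orbit_comp {p : Perm (Fin n)} {i : Fin n} (g : Fin n → ZMod 2)
    (σ : Fin n → Fin n) (hinj : Function.Injective σ)
    (hmem : ∀ j ∈ orbitOf p i, σ j ∈ orbitOf p i) :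
    ∑ j ∈ orbitOf p i, g (σ j) = ∑ j ∈ orbitOf p i, g j := by
  have himg : (orbitOf p i).image σ = orbitOf p i := by
    apply Finset.eq_of_subset_of_card_le
    · intro j hj
      obtain ⟨a, ha, rfl⟩ := Finset.mem_image.1 hj
      exact hmem a ha
    · rw [Finset.card_image_of_injective _ hinj]
  calc ∑ j ∈ orbitOf p i, g (σ j)
      = ∑ j ∈ (orbitOf p i).image σ, g j :=
        (Finset.sum_image fun a _ b _ hab => hinj hab).symm
    _ = ∑ j ∈ orbitOf p i, g j := by rw [himg]

/-- Existence of a potential: given `h` with zero cycle sums, solve `f ∘ p = f + h`. -/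
lemma solve_potential (p : Perm (Fin n)) (h : Fin n → ZMod 2)
    (hsum : ∀ i, ∑ j ∈ orbitOf p i, h j = 0) :
    ∃ f : Fin n → ZMod 2, ∀ i, f (p i) = f i + h i := by
  classical
  have hne : ∀ i : Fin n, (orbitOf p i).Nonempty := fun i => ⟨i, self_mem_orbitOf p i⟩
  set b : Fin n → Fin n := fun i => (orbitOf p i).min' (hne i) with hbdef
  have hbsc : ∀ i, p.SameCycle (b i) i := fun i =>
    (mem_orbitOf.1 ((orbitOf p i).min'_mem (hne i))).symm
  have hbcongr : ∀ {i j : Fin n}, p.SameCycle i j → b i = b j := by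
    intro i j hij
    simp only [hbdef, orbitOf_congr hij]
  have hex : ∀ i, ∃ m : ℕ, (p ^ m) (b i) = i := fun i => by
    obtain ⟨m, _, hm⟩ := (hbsc i).exists_pow_eq'
    exact ⟨m, hm⟩
  set N : Fin n → ℕ := fun i => Nat.find (hex i) with hNdef
  have hNs : ∀ i, (p ^ N i) (b i) = i := fun i => Nat.find_spec (hex i)
  have hNmin : ∀ i, ∀ m < N i, (p ^ m) (b i) ≠ i := fun i m hm => Nat.find_min (hex i) hm
  refine ⟨fun i => ∑ m ∈ Finset.range (N i), h ((p ^ m) (b i)), fun i => ?_⟩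
  show ∑ m ∈ Finset.range (N (p i)), h ((p ^ m) (b (p i)))
      = ∑ m ∈ Finset.range (N i), h ((p ^ m) (b i)) + h i
  have hbp : b (p i) = b i := (hbcongr (⟨1, by simp⟩ : p.SameCycle i (p i))).symm
  have hstep : (p ^ (N i + 1)) (b i) = p i := by
    rw [pow_succ', Perm.mul_apply, hNs]
  have hle : N (p i) ≤ N i + 1 := Nat.find_le (by rw [hbp]; exact hstep)
  rcases eq_or_lt_of_le hle with heq | hlt
  · rw [heq, hbp, Finset.sum_range_succ, hNs]
  · -- wrap-around case
    have hM : (p ^ N (p i)) (b i) = p i := by rw [← hbp]; exact hNs (p i)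
    have hM0 : N (p i) = 0 := by
      by_contra h0
      obtain ⟨M, hMeq⟩ : ∃ M, N (p i) = M + 1 := ⟨N (p i) - 1, by omega⟩
      have hMi : (p ^ M) (b i) = i := by
        have h' := hM
        rw [hMeq, pow_succ', Perm.mul_apply] at h'
        exact p.injective h'
      exact hNmin i M (by omega) hMi
    have hpib : p i = b i := by rw [← hM, hM0, pow_zero]; rfl
    have hL : (p ^ (N i + 1)) (b i) = b i := by rw [hstep, hpib]
    have hinj : ∀ a₁ ∈ Finset.range (N i + 1), ∀ a₂ ∈ Finset.range (N i + 1),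
        (p ^ a₁) (b i) = (p ^ a₂) (b i) → a₁ = a₂ := by
      have key : ∀ a c, a < c → c ≤ N i → (p ^ a) (b i) = (p ^ c) (b i) → False := by
        intro a c hac hcN heq'
        have hcalc : (p ^ (N i - c + a)) (b i) = i := by
          calc (p ^ (N i - c + a)) (b i)
              = (p ^ (N i - c)) ((p ^ a) (b i)) := by rw [pow_add, Perm.mul_apply]
            _ = (p ^ (N i - c)) ((p ^ c) (b i)) := by rw [heq']
            _ = (p ^ (N i - c + c)) (b i) := by rw [pow_add, Perm.mul_apply]
            _ = i := by rw [Nat.sub_add_cancel hcN, hNs]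
        exact hNmin i (N i - c + a) (by omega) hcalc
      intro a₁ h₁ a₂ h₂ heq'
      rw [Finset.mem_range] at h₁ h₂
      rcases lt_trichotomy a₁ a₂ with hlt' | heq'' | hlt'
      · exact absurd heq' fun w => key a₁ a₂ hlt' (by omega) w
      · exact heq''
      · exact absurd heq'.symm fun w => key a₂ a₁ hlt' (by omega) w
    have hperiodic : ∀ q r : ℕ, (p ^ ((N i + 1) * q + r)) (b i) = (p ^ r) (b i) := by
      intro q
      induction q with
      | zero => intro r; simp
      | succ q ih =>
        intro r
        have harith : (N i + 1) * (q + 1) + r = (N i + 1) * q + (r + (N i + 1)) := by ring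
        rw [harith, ih, pow_add, Perm.mul_apply, hL]
    have himage : (Finset.range (N i + 1)).image (fun m => (p ^ m) (b i))
        = orbitOf p (b i) := by
      apply Finset.Subset.antisymm
      · intro j hj
        obtain ⟨m, _, rfl⟩ := Finset.mem_image.1 hj
        exact mem_orbitOf.2 ⟨(m : ℤ), by rw [zpow_natCast]⟩
      · intro j hj
        obtain ⟨m, _, hm⟩ := (mem_orbitOf.1 hj).exists_pow_eq'
        refine Finset.mem_image.2
          ⟨m % (N i + 1), Finset.mem_range.2 (Nat.mod_lt _ (by omega)), ?_⟩
        have hqr := hperiodic (m / (N i + 1)) (m % (N i + 1))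
        rw [Nat.div_add_mod m (N i + 1)] at hqr
        exact hqr.symm.trans hm
    have hfull : ∑ m ∈ Finset.range (N i + 1), h ((p ^ m) (b i)) = 0 := by
      calc ∑ m ∈ Finset.range (N i + 1), h ((p ^ m) (b i))
          = ∑ j ∈ (Finset.range (N i + 1)).image (fun m => (p ^ m) (b i)), h j :=
            (Finset.sum_image hinj).symm
        _ = ∑ j ∈ orbitOf p (b i), h j := by rw [himage]
        _ = 0 := hsum (b i)
    have hend : ∑ m ∈ Finset.range (N i), h ((p ^ m) (b i)) + h i = 0 := by
      conv_lhs => rw [show h i = h ((p ^ N i) (b i)) by rw [hNs]]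
      rw [← Finset.sum_range_succ]
      exact hfull
    rw [hM0, Finset.range_zero, Finset.sum_empty]
    exact hend.symm

end Aux

open GS in
/-- Every element of the hyperoctahedral group `Z_2 ≀ S_n` is
`Z_2 ≀ S_{n-1}`-conjugate to its inverse. -/
theorem hyperoctahedral_conj_inv (n : ℕ) (hn : 1 ≤ n) (x : GS 2 n) :
    ∃ z ∈ K 2 n hn, z⁻¹ * x * z = x⁻¹ := by
  classical
  obtain ⟨g, p⟩ := x
  have hz2 : ∀ a : ZMod 2, a + a = 0 := by decide
  set ν : Fin n := lastPt n hn with hν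
  set T : Fin n → Fin n := Tfun p ν with hTdef
  have hTT : Function.Involutive T := Tfun_invol p ν
  let t : Equiv.Perm (Fin n) := ⟨T, T, hTT, hTT⟩
  have htapp : ∀ i, t i = T i := fun i => rfl
  have htinv : ∀ i, t⁻¹ i = T i := fun i => rfl
  have hTp : ∀ i, T (p i) = p⁻¹ (T i) := Tfun_apply p ν
  have hTpinv : ∀ i, T (p⁻¹ i) = p (T i) := by
    intro i
    have := hTp (p⁻¹ i)
    rw [← Equiv.Perm.mul_apply, mul_inv_cancel, Equiv.Perm.one_apply] at this
    rw [this, ← Equiv.Perm.mul_apply, mul_inv_cancel, Equiv.Perm.one_apply]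
  have hTν : T ν = ν := Tfun_fix p ν
  set h : Fin n → ZMod 2 := fun i => g (T i) + g (p i) with hh
  have hsum : ∀ i, ∑ j ∈ orbitOf p i, h j = 0 := by
    intro i
    have h1 : ∑ j ∈ orbitOf p i, g (T j) = ∑ j ∈ orbitOf p i, g j :=
      sum_orbit_comp g T hTT.injective fun j hj =>
        mem_orbitOf.2 ((mem_orbitOf.1 hj).trans (sameCycle_Tfun p ν j))
    have h2 : ∑ j ∈ orbitOf p i, g (p j) = ∑ j ∈ orbitOf p i, g j :=
      sum_orbit_comp g p p.injective fun j hj =>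
        mem_orbitOf.2 ((mem_orbitOf.1 hj).trans ⟨1, by simp⟩)
    calc ∑ j ∈ orbitOf p i, h j
        = ∑ j ∈ orbitOf p i, g (T j) + ∑ j ∈ orbitOf p i, g (p j) :=
          Finset.sum_add_distrib
      _ = 0 := by rw [h1, h2]; exact hz2 _
  obtain ⟨f0, hf0⟩ := solve_potential p h hsum
  set f : Fin n → ZMod 2 := fun i => f0 i + (if p.SameCycle ν i then f0 ν else 0) with hfdef
  have hfrec : ∀ i, f (p i) = f i + h i := by
    intro i
    have hiff : p.SameCycle ν (p i) ↔ p.SameCycle ν i := Equiv.Perm.sameCycle_apply_right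
    show f0 (p i) + (if p.SameCycle ν (p i) then f0 ν else 0)
        = f0 i + (if p.SameCycle ν i then f0 ν else 0) + h i
    rw [hf0 i]
    by_cases hc : p.SameCycle ν i
    · rw [if_pos (hiff.2 hc), if_pos hc]; ring
    · rw [if_neg fun w => hc (hiff.1 w), if_neg hc]; ring
  have hfν : f ν = 0 := by
    show f0 ν + (if p.SameCycle ν ν then f0 ν else 0) = 0
    rw [if_pos (Equiv.Perm.SameCycle.refl p ν)]
    exact hz2 _
  refine ⟨(f, t), ⟨?_, ?_⟩, ?_⟩
  · exact hTν
  · exact hfν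
  · refine Prod.ext ?_ ?_
    · funext i
      show -f (t (p⁻¹ (t⁻¹ i))) + g (t⁻¹ i) + f i = -g (p i)
      rw [htinv, htapp, hTpinv, hTT i]
      have hr := hfrec i
      show -f (p i) + g (T i) + f i = -g (p i)
      rw [hr]
      show -(f i + (g (T i) + g (p i))) + g (T i) + f i = -g (p i)
      generalize f i = a
      generalize g (T i) = b2
      generalize g (p i) = c
      revert a b2 c
      decide
    · show t * (p * t⁻¹) = p⁻¹
      ext i
      rw [Equiv.Perm.mul_apply, Equiv.Perm.mul_apply, htinv, htapp, hTp, hTT]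
end
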